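/- arXiv:1502.04556 — 2 statements merged into one kernel-verified Lean document; each statement's English description precedes it below -/
import Mathlib

section
/- Let A be a regular closed subspace of a Tychonoff space X (i.e., A is the closure of an open set). Then cl_{βX} A ⊆ υX if and only if A is pseudocompact. -/
/-- A space is pseudocompact if every continuous real-valued function on it is bounded. -/
def IsPseudocompactSpace (Y : Type) [TopologicalSpace Y] : Prop :=
  ∀ f : Y → ℝ, Continuous f → ∃ M : ℝ, ∀ y : Y, |f y| ≤ M

def hewitt (X : Type) [TopologicalSpace X] : Set (StoneCech X) :=
  ⋂₀ {C : Set (StoneCech X) |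
      (∃ f : StoneCech X → ℝ, Continuous f ∧ C = {x | f x ≠ 0}) ∧
        Set.range (stoneCechUnit : X → StoneCech X) ⊆ C}

/-!
If `A` is pseudocompact, every continuous `F : βX → ℝ` that does not vanish on `X` is bounded
away from zero on `A`, hence does not vanish on `cl_{βX} A`; so `cl_{βX} A ⊆ υX`.

Conversely, if `f` is continuous and unbounded on `A = cl U`, the sets `{|f| > n}` are open in `A`
and locally finite; since `U` is dense in `A` they contain nonempty open sets `Oₙ ⊆ U` of `X`,
still locally finite. Summing bumps `n • φₙ` supported in `Oₙ` gives a continuous `g ≥ 0` on `X`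
that is unbounded on `A`. The extension of `(1 + |g|)⁻¹` to `βX` is positive on `X`, but it takes
arbitrarily small values on the compact set `cl_{βX} A`, so it vanishes at a point of `cl_{βX} A`,
which therefore lies outside `υX`.
-/

open Set Function

section

variable {X : Type} [TopologicalSpace X]

theorem mem_hewitt_iff {p : StoneCech X} :
    p ∈ hewitt X ↔ ∀ F : StoneCech X → ℝ, Continuous F →
      (∀ x, F (stoneCechUnit x) ≠ 0) → F p ≠ 0 := by
  simp only [hewitt, mem_sInter, mem_ofPred_eq]
  constructor
  · intro h F hF hne
    exact h _ ⟨⟨F, hF, rfl⟩, by rintro - ⟨x, rfl⟩; exact hne x⟩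
  · rintro h C ⟨⟨F, hF, rfl⟩, hrange⟩
    exact h F hF fun x => hrange ⟨x, rfl⟩

theorem IsPseudocompactSpace.exists_pos_le_abs {Y : Type} [TopologicalSpace Y]
    (hY : IsPseudocompactSpace Y) {f : Y → ℝ} (hf : Continuous f) (hne : ∀ y, f y ≠ 0) :
    ∃ ε > 0, ∀ y, ε ≤ |f y| := by
  obtain ⟨M, hM⟩ := hY (fun y => |f y|⁻¹) (hf.abs.inv₀ fun y => abs_ne_zero.mpr (hne y))
  refine ⟨(max M 1)⁻¹, by positivity, fun y => ?_⟩
  have hpos : 0 < |f y| := abs_pos.mpr (hne y)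
  rw [inv_le_comm₀ (by positivity) hpos]
  calc |f y|⁻¹ = |(|f y|⁻¹)| := (abs_of_pos (inv_pos.mpr hpos)).symm
    _ ≤ M := hM y
    _ ≤ max M 1 := le_max_left M 1

theorem closure_image_stoneCechUnit_subset_hewitt {A : Set X} (hA : IsPseudocompactSpace A) :
    closure (stoneCechUnit '' A) ⊆ hewitt X := by
  intro p hp
  rw [mem_hewitt_iff]
  intro F hF hne
  obtain ⟨ε, hε, hεF⟩ := hA.exists_pos_le_abs
    (hF.comp (continuous_stoneCechUnit.comp continuous_subtype_val)) fun a => hne a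
  have hsub : closure (stoneCechUnit '' A) ⊆ {q | ε ≤ |F q|} :=
    closure_minimal (by rintro - ⟨a, ha, rfl⟩; exact hεF ⟨a, ha⟩)
      (isClosed_le continuous_const hF.abs)
  exact abs_pos.mp (hε.trans_le (hsub hp))

theorem not_closure_image_stoneCechUnit_subset_hewitt {s : Set X} {g : X → ℝ}
    (hg : Continuous g) (hs : ¬ BddAbove (g '' s)) :
    ¬ closure (stoneCechUnit '' s) ⊆ hewitt X := by
  have hpos : ∀ x, 0 < 1 + |g x| := fun x => by positivity
  have hmem : ∀ x, (1 + |g x|)⁻¹ ∈ unitInterval := fun x =>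
    ⟨(inv_pos.mpr (hpos x)).le, inv_le_one_of_one_le₀ (le_add_of_nonneg_right (abs_nonneg _))⟩
  have hh : Continuous fun x => (⟨(1 + |g x|)⁻¹, hmem x⟩ : unitInterval) :=
    ((continuous_const.add hg.abs).inv₀ fun x => (hpos x).ne').subtype_mk _
  set F : StoneCech X → ℝ := fun p => ((stoneCechExtend hh p : unitInterval) : ℝ)
  have hFc : Continuous F := continuous_subtype_val.comp (continuous_stoneCechExtend hh)
  have hFunit : ∀ x, F (stoneCechUnit x) = (1 + |g x|)⁻¹ := fun x =>
    congrArg Subtype.val (congrFun (stoneCechExtend_extends hh) x)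
  have h0 : (0 : ℝ) ∈ closure (F '' (stoneCechUnit '' s)) := by
    rw [Metric.mem_closure_iff]
    intro ε hε
    obtain ⟨-, ⟨x, hx, rfl⟩, hgx⟩ := not_bddAbove_iff.mp hs ε⁻¹
    refine ⟨F (stoneCechUnit x), mem_image_of_mem _ (mem_image_of_mem _ hx), ?_⟩
    rw [hFunit, dist_zero_left, Real.norm_eq_abs, abs_of_pos (inv_pos.mpr (hpos x))]
    exact inv_lt_of_inv_lt₀ hε (by linarith [le_abs_self (g x)])
  have hclosed : IsClosed (F '' closure (stoneCechUnit '' s)) :=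
    (isClosed_closure.isCompact.image hFc).isClosed
  obtain ⟨p, hp, hFp⟩ := closure_minimal (image_mono subset_closure) hclosed h0
  intro hsub
  refine mem_hewitt_iff.mp (hsub hp) F hFc (fun x => ?_) hFp
  rw [hFunit]
  exact (inv_pos.mpr (hpos x)).ne'

theorem Continuous.locallyFinite_setOf_natCast_lt {Y : Type*} [TopologicalSpace Y] {f : Y → ℝ}
    (hf : Continuous f) : LocallyFinite fun n : ℕ => {y | (n : ℝ) < f y} := by
  intro y
  refine ⟨{z | f z < f y + 1}, (isOpen_lt hf continuous_const).mem_nhds (lt_add_one (f y)),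
    (finite_Iio ⌈f y + 1⌉₊).subset ?_⟩
  rintro n ⟨z, hnz, hz⟩
  exact Nat.lt_ceil.mpr (hnz.trans hz)

theorem IsClosed.locallyFinite_image_val {ι : Type*} {A : Set X} (hA : IsClosed A)
    {W : ι → Set A} (hW : LocallyFinite W) : LocallyFinite fun i => ((↑) '' W i : Set X) := by
  intro x
  by_cases hx : x ∈ A
  · obtain ⟨t, ht, hfin⟩ := hW ⟨x, hx⟩
    obtain ⟨u, hu, hut⟩ := (mem_nhds_subtype A _ t).mp ht
    refine ⟨u, hu, hfin.subset ?_⟩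
    rintro i ⟨-, ⟨a, ha, rfl⟩, hau⟩
    exact ⟨a, ha, hut hau⟩
  · refine ⟨Aᶜ, hA.isOpen_compl.mem_nhds hx, finite_empty.subset ?_⟩
    rintro i ⟨-, ⟨a, -, rfl⟩, ha⟩
    exact ha a.2

theorem IsOpen.exists_isOpen_nonempty_subset_image_val {U : Set X} (hU : IsOpen U)
    {V : Set (closure U)} (hV : IsOpen V) (hne : V.Nonempty) :
    ∃ O : Set X, IsOpen O ∧ O.Nonempty ∧ O ⊆ U ∧ O ⊆ (↑) '' V := by
  obtain ⟨G, hG, rfl⟩ := isOpen_induced_iff.mp hV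
  obtain ⟨⟨a, ha⟩, haG⟩ := hne
  obtain ⟨x, hxG, hxU⟩ := mem_closure_iff.mp ha G hG haG
  refine ⟨G ∩ U, hG.inter hU, ⟨x, hxG, hxU⟩, inter_subset_right, ?_⟩
  rintro y ⟨hyG, hyU⟩
  exact ⟨⟨y, subset_closure hyU⟩, hyG, rfl⟩

theorem CompletelyRegularSpace.exists_continuous_nonneg_support_subset [CompletelyRegularSpace X]
    {O : Set X} (hO : IsOpen O) {x : X} (hx : x ∈ O) :
    ∃ φ : X → ℝ, Continuous φ ∧ (∀ y, 0 ≤ φ y) ∧ φ x = 1 ∧ support φ ⊆ O := by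
  obtain ⟨f, hf, hfx, hfO⟩ := CompletelyRegularSpace.completely_regular_isOpen x O hO hx
  refine ⟨fun y => unitInterval.symm (f y),
    continuous_subtype_val.comp (unitInterval.continuous_symm.comp hf),
    fun y => (unitInterval.symm (f y)).2.1, by simp [hfx], fun y hy => ?_⟩
  by_contra hyO
  exact hy (by simp [hfO hyO])

theorem LocallyFinite.exists_continuous_natCast_le [CompletelyRegularSpace X] {O : ℕ → Set X}
    (hlf : LocallyFinite O) (hO : ∀ n, IsOpen (O n)) {x : ℕ → X} (hx : ∀ n, x n ∈ O n) :
    ∃ g : X → ℝ, Continuous g ∧ ∀ n : ℕ, (n : ℝ) ≤ g (x n) := by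
  choose φ hφc hφ0 hφx hφO using fun n =>
    CompletelyRegularSpace.exists_continuous_nonneg_support_subset (hO n) (hx n)
  have hsupp : ∀ n : ℕ, support (fun z => (n : ℝ) * φ n z) ⊆ O n := fun n =>
    (support_mul_subset_right _ _).trans (hφO n)
  refine ⟨fun z => ∑ᶠ n : ℕ, (n : ℝ) * φ n z,
    continuous_finsum (fun n => continuous_const.mul (hφc n)) (hlf.subset hsupp), fun m => ?_⟩
  have hle : (m : ℝ) * φ m (x m) ≤ ∑ᶠ n : ℕ, (n : ℝ) * φ n (x m) :=
    single_le_finsum m ((hlf.point_finite (x m)).subset fun n hn => hsupp n hn)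
    fun n => mul_nonneg (Nat.cast_nonneg n) (hφ0 n (x m))
  rwa [hφx m, mul_one] at hle

theorem exists_continuous_not_bddAbove_image_closure [CompletelyRegularSpace X] {U : Set X}
    (hU : IsOpen U) (h : ¬ IsPseudocompactSpace (closure U)) :
    ∃ g : X → ℝ, Continuous g ∧ ¬ BddAbove (g '' closure U) := by
  simp only [IsPseudocompactSpace, not_forall, not_exists, not_le] at h
  obtain ⟨f, hf, hunb⟩ := h
  choose O hOopen hOne hOU hOf using fun n : ℕ =>
    hU.exists_isOpen_nonempty_subset_image_val (isOpen_lt continuous_const hf.abs) (hunb n)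
  choose x hx using hOne
  have hlf : LocallyFinite O :=
    (isClosed_closure.locallyFinite_image_val hf.abs.locallyFinite_setOf_natCast_lt).subset hOf
  obtain ⟨g, hg, hgx⟩ := hlf.exists_continuous_natCast_le hOopen hx
  refine ⟨g, hg, fun ⟨M, hM⟩ => ?_⟩
  obtain ⟨n, hn⟩ := exists_nat_gt M
  exact (hn.trans_le (hgx n)).not_ge (hM (mem_image_of_mem g (subset_closure (hOU n (hx n)))))

end

/-- for a regular closed `A ⊆ X`, `cl_{βX} A ⊆ υX` iff `A` is pseudocompact. -/
theorem stmt2 (X : Type) [TopologicalSpace X] [T35Space X] (A : Set X)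
    (hA : ∃ U : Set X, IsOpen U ∧ A = closure U) :
    closure (stoneCechUnit '' A) ⊆ hewitt X ↔ IsPseudocompactSpace A := by
  obtain ⟨U, hU, rfl⟩ := hA
  refine ⟨fun hsub => ?_, closure_image_stoneCechUnit_subset_hewitt⟩
  by_contra hps
  obtain ⟨g, hg, hunb⟩ := exists_continuous_not_bddAbove_image_closure hU hps
  exact not_closure_image_stoneCechUnit_subset_hewitt hg hunb hsub
end

section
/- Let X be a normal Tychonoff space, P realcompactness, and λ_P X = ⋃ { int_{βX} cl_{βX} C : C cozero in X with cl_X C realcompact }. Then λ_P X = βX \ cl_{βX}(υX \ X). -/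
def IsRealcompactSpace (Y : Type) [TopologicalSpace Y] : Prop :=
  ∃ (ι : Type) (f : Y → ι → ℝ), Topology.IsClosedEmbedding f

def IsCoz {X : Type} [TopologicalSpace X] (C : Set X) : Prop :=
  ∃ f : X → ℝ, Continuous f ∧ C = {x | f x ≠ 0}

/-!
For closed `A` in a normal Tychonoff `X`, `A` is realcompact iff `cl_{βX} A ∩ υX ⊆ X`.
Forward: by Tietze the coordinates of a closed embedding `A → ℝ^ι` extend to `X`, continuous
real functions on `X` converge along the trace on `X` of the neighbourhoods of any point of
`υX`, and the limit lies in the closed image of `A`. Backward: `cl_{βX} A ∩ υX` is a closed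
subset of the compact `βX` cut down by cozero sets, hence realcompact. Thus an open
`int cl_{βX} C` with `cl_X C` realcompact misses `υX \ X`, hence its closure; conversely a
Urysohn function `F` on `βX`, zero on `cl_{βX}(υX \ X)` and one at `p`, yields the cozero set
`C = {F > 1/2}` with `p ∈ int cl_{βX} C`.
-/

open Topology Filter Set

theorem isCoz_setOf_lt {X : Type} [TopologicalSpace X] {f : X → ℝ} (hf : Continuous f)
    (a : ℝ) : IsCoz {x | a < f x} := by
  refine ⟨fun x => max (f x - a) 0, (hf.sub continuous_const).max continuous_const, ?_⟩
  ext x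
  simp

namespace IsRealcompactSpace

variable {A Y : Type} [TopologicalSpace A] [TopologicalSpace Y]

theorem of_isClosedEmbedding (hY : IsRealcompactSpace Y) {j : A → Y} (hj : IsClosedEmbedding j) :
    IsRealcompactSpace A :=
  let ⟨ι, g, hg⟩ := hY
  ⟨ι, g ∘ j, hg.comp hj⟩

theorem of_compactSpace [CompactSpace Y] [T2Space Y] : IsRealcompactSpace Y := by
  refine ⟨C(Y, ℝ), fun y f => f y, Continuous.isClosedEmbedding (by fun_prop) ?_⟩
  intro y₁ y₂ h
  by_contra hne
  obtain ⟨f, hf₁, hf₂, -⟩ := exists_continuous_zero_one_of_isClosed isClosed_singleton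
    isClosed_singleton (disjoint_singleton.2 hne)
  have := congrFun h f
  simp only [hf₁ rfl, hf₂ rfl] at this
  exact zero_ne_one this

theorem prod_pi (hY : IsRealcompactSpace Y) (κ : Type) : IsRealcompactSpace (Y × (κ → ℝ)) :=
  let ⟨ι, g, hg⟩ := hY
  ⟨ι ⊕ κ, Homeomorph.sumArrowHomeomorphProdArrow.symm ∘ Prod.map g id,
    Homeomorph.isClosedEmbedding _ |>.comp (hg.prodMap IsClosedEmbedding.id)⟩

/-- The embedding `a ↦ (j a, (1 / f_U (j a))_U)`, with `f_U` defining the cozero set `U ∈ 𝒞`,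
has closed range in `Y × ℝ^𝒞`. -/
theorem of_isEmbedding_of_range_eq (hY : IsRealcompactSpace Y) {j : A → Y} (hj : IsEmbedding j)
    {D : Set Y} (hD : IsClosed D) {𝒞 : Set (Set Y)} (h𝒞 : ∀ U ∈ 𝒞, IsCoz U)
    (hj_range : range j = D ∩ ⋂₀ 𝒞) : IsRealcompactSpace A := by
  choose f hf hfU using h𝒞
  have hf_ne : ∀ (U : 𝒞) (y : Y), y ∈ ⋂₀ 𝒞 → f U U.2 y ≠ 0 := fun U y hy =>
    (Set.ext_iff.1 (hfU U U.2) y).1 (hy U U.2)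
  let Φ : A → Y × (𝒞 → ℝ) := fun a => (j a, fun U => (f U U.2 (j a))⁻¹)
  have hΦ : Continuous Φ := hj.continuous.prodMk <| continuous_pi fun U =>
    ((hf U U.2).comp hj.continuous).inv₀ fun a =>
      hf_ne U _ (hj_range.subset (mem_range_self a)).2
  have hΦ_range : range Φ = {p | p.1 ∈ D ∧ ∀ U : 𝒞, f U U.2 p.1 * p.2 U = 1} := by
    apply Subset.antisymm
    · rintro _ ⟨a, rfl⟩
      have ha := hj_range.subset (mem_range_self a)
      exact ⟨ha.1, fun U => mul_inv_cancel₀ (hf_ne U _ ha.2)⟩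
    · rintro ⟨y, t⟩ ⟨hyD, hyt⟩
      have hy : y ∈ ⋂₀ 𝒞 := fun U hU =>
        (Set.ext_iff.1 (hfU U hU) y).2 (left_ne_zero_of_mul_eq_one (hyt ⟨U, hU⟩))
      obtain ⟨a, rfl⟩ : y ∈ range j := hj_range ▸ ⟨hyD, hy⟩
      exact ⟨a, Prod.ext rfl (funext fun U => (eq_inv_of_mul_eq_one_right (hyt U)).symm)⟩
  refine (hY.prod_pi 𝒞).of_isClosedEmbedding (j := Φ) ⟨⟨?_, fun a b h => hj.injective
    (congrArg Prod.fst h)⟩, ?_⟩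
  · exact IsInducing.of_comp hΦ continuous_fst hj.isInducing
  · rw [hΦ_range, ofPred_and, ofPred_forall]
    exact (hD.preimage continuous_fst).inter <| isClosed_iInter fun U =>
      isClosed_eq (((hf U U.2).comp continuous_fst).mul ((continuous_apply U).comp continuous_snd))
        continuous_const

end IsRealcompactSpace

section Hewitt

variable {X : Type} [TopologicalSpace X]

theorem apply_ne_zero_of_mem_hewitt {q : StoneCech X} (hq : q ∈ hewitt X)
    {u : StoneCech X → ℝ} (hu : Continuous u) (hu_ne : ∀ x, u (stoneCechUnit x) ≠ 0) :
    u q ≠ 0 :=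
  hq {r | u r ≠ 0} ⟨⟨u, hu, rfl⟩, range_subset_iff.2 hu_ne⟩

/-- Extend `φ ∘ f`, with `φ : ℝ ≃ (-1, 1)`, to `βX → [-1, 1]`; at a point of `υX` the
extension cannot take the values `±1`, so `f` converges to the `φ`-preimage of that value. -/
theorem exists_tendsto_comap_nhds_of_mem_hewitt {f : X → ℝ} (hf : Continuous f)
    {q : StoneCech X} (hq : q ∈ hewitt X) :
    ∃ y, Tendsto f (comap stoneCechUnit (𝓝 q)) (𝓝 y) := by
  let φ := (orderIsoIooNegOneOne ℝ).toHomeomorph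
  let g : X → Icc (-1 : ℝ) 1 := fun x => ⟨φ (f x), Ioo_subset_Icc_self (φ (f x)).2⟩
  have hg : Continuous g := ((continuous_subtype_val.comp φ.continuous).comp hf).subtype_mk _
  let F := stoneCechExtend hg
  have hF : Continuous F := continuous_stoneCechExtend hg
  have hFe : ∀ x, (F (stoneCechUnit x) : ℝ) = φ (f x) := fun x =>
    congrArg Subtype.val (congrFun (stoneCechExtend_extends hg) x)
  have hFq : (F q : ℝ) ∈ Ioo (-1) 1 := by
    have hne := apply_ne_zero_of_mem_hewitt hq (u := fun r => (1 + F r) * (1 - F r))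
      (by fun_prop) fun x => by
        have := (φ (f x)).2
        rw [hFe]
        exact mul_ne_zero (by linarith [this.1]) (by linarith [this.2])
    obtain ⟨h₁, h₂⟩ := (F q).2
    exact ⟨lt_of_le_of_ne h₁ fun h => hne (by rw [← h]; ring),
      lt_of_le_of_ne h₂ fun h => hne (by rw [h]; ring)⟩
  refine ⟨φ.symm ⟨F q, hFq⟩, ?_⟩
  have hφf : Tendsto (fun x => φ (f x)) (comap stoneCechUnit (𝓝 q)) (𝓝 ⟨F q, hFq⟩) := by
    refine tendsto_subtype_rng.2 ?_
    simp only [← hFe]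
    exact ((continuous_subtype_val.comp hF).tendsto q).comp tendsto_comap
  simpa only [Function.comp_def, Homeomorph.symm_apply_apply] using
    (φ.symm.continuous.tendsto _).comp hφf

theorem closure_image_inter_hewitt_subset [NormalSpace X] {A : Set X} (hA : IsClosed A)
    (hRC : IsRealcompactSpace A) :
    closure (stoneCechUnit '' A) ∩ hewitt X ⊆ stoneCechUnit '' A := by
  obtain ⟨ι, g, hg⟩ := hRC
  rintro q ⟨hqA, hqυ⟩
  obtain ⟨G, hG⟩ := ContinuousMap.exists_restrict_eq hA ⟨g, hg.continuous⟩
  choose y hy using fun i =>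
    exists_tendsto_comap_nhds_of_mem_hewitt ((continuous_apply i).comp G.continuous) hqυ
  let L : Filter A := comap (stoneCechUnit ∘ (↑)) (𝓝 q)
  have : L.NeBot := comap_neBot fun t ht => by
    obtain ⟨_, hxt, x, hxA, rfl⟩ := mem_closure_iff_nhds.1 hqA t ht
    exact ⟨⟨x, hxA⟩, hxt⟩
  have hgy : Tendsto g L (𝓝 y) := by
    refine tendsto_pi_nhds.2 fun i => ?_
    have hval : Tendsto ((↑) : A → X) L (comap stoneCechUnit (𝓝 q)) :=
      tendsto_comap_iff.2 tendsto_comap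
    exact ((hy i).comp hval).congr fun k => congrFun (DFunLike.congr_fun hG k) i
  obtain ⟨a, rfl⟩ := hg.isClosed_range.mem_of_tendsto hgy (Eventually.of_forall mem_range_self)
  have ha : Tendsto id L (𝓝 a) := hg.tendsto_nhds_iff.2 hgy
  exact ⟨a, a.2, tendsto_nhds_unique
    (((continuous_stoneCechUnit.comp continuous_subtype_val).tendsto a).comp ha) tendsto_comap⟩

theorem isRealcompactSpace_closure_of_closure_image_inter_hewitt_subset [T35Space X]
    {C : Set X} (hC : closure (stoneCechUnit '' C) ∩ hewitt X ⊆ range stoneCechUnit) :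
    IsRealcompactSpace (closure C) := by
  refine IsRealcompactSpace.of_compactSpace.of_isEmbedding_of_range_eq
    (isEmbedding_stoneCechUnit.comp IsEmbedding.subtypeVal)
    (isClosed_closure (s := stoneCechUnit '' C))
    (𝒞 := {U | IsCoz U ∧ range stoneCechUnit ⊆ U}) (fun _ hU => hU.1) ?_
  rw [range_comp, Subtype.range_coe]
  refine Subset.antisymm (fun _ hq => ⟨image_closure_subset_closure_image
    continuous_stoneCechUnit hq, fun _ hU => hU.2 (image_subset_range _ _ hq)⟩) ?_
  rintro q ⟨hq, hqυ⟩
  obtain ⟨x, rfl⟩ := hC ⟨hq, hqυ⟩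
  exact ⟨x, by rwa [isInducing_stoneCechUnit.closure_eq_preimage_closure_image], rfl⟩

end Hewitt

/-- for a normal Tychonoff `X` and `P` realcompactness,
`λ_P X = βX \ cl_{βX}(υX \ X)`. -/
theorem stmt10 (X : Type) [TopologicalSpace X] [T35Space X] [NormalSpace X] :
    (⋃₀ {V : Set (StoneCech X) |
        ∃ C : Set X, IsCoz C ∧ IsRealcompactSpace ↥(closure C) ∧
          V = interior (closure (stoneCechUnit '' C))}) =
      (closure (hewitt X \ Set.range (stoneCechUnit : X → StoneCech X)))ᶜ := by
  ext p
  simp only [mem_sUnion, mem_ofPred_eq, mem_compl_iff]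
  constructor
  · rintro ⟨_, ⟨C, -, hC, rfl⟩, hp⟩ hp_cl
    obtain ⟨q, hqV, hqυ, hqX⟩ := mem_closure_iff.1 hp_cl _ isOpen_interior hp
    have hC' := closure_image_inter_hewitt_subset isClosed_closure hC
    rw [closure_image_closure continuous_stoneCechUnit] at hC'
    exact hqX (image_subset_range _ _ (hC' ⟨interior_subset hqV, hqυ⟩))
  · intro hp
    obtain ⟨F, hF₀, hF₁, -⟩ := exists_continuous_zero_one_of_isClosed isClosed_closure
      isClosed_singleton (disjoint_singleton_right.2 hp)
    have hW : IsOpen {r | 1 / 2 < F r} := isOpen_lt continuous_const F.continuous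
    let C : Set X := stoneCechUnit ⁻¹' {r | 1 / 2 < F r}
    have hC_le : closure (stoneCechUnit '' C) ⊆ {r | 1 / 2 ≤ F r} :=
      (closure_mono (image_preimage_subset _ _)).trans
        (closure_lt_subset_le continuous_const F.continuous)
    have hC : IsCoz C := isCoz_setOf_lt (F.continuous.comp continuous_stoneCechUnit) _
    refine ⟨_, ⟨C, hC, ?_, rfl⟩, ?_⟩
    · refine isRealcompactSpace_closure_of_closure_image_inter_hewitt_subset fun q hq => ?_
      by_contra hqX
      have := hC_le hq.1
      norm_num [hF₀ (subset_closure ⟨hq.2, hqX⟩)] at this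
    · refine interior_maximal ?_ hW (by norm_num [hF₁ rfl])
      rw [image_preimage_eq_inter_range]
      exact Dense.open_subset_closure_inter denseRange_stoneCechUnit hW
end
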